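/- arXiv:2009.02970 — 2 statements merged into one kernel-verified Lean document; each statement's English description precedes it below -/
import Mathlib

section
/- Under a random gossip step (two indices drawn independently and uniformly, both set to their average), the expected variance satisfies E[Var(x') | x] = (1 − 1/n)·Var(x), where Var(x) = (1/n)∑_k (x_k − x̄)². -/
open Finset

noncomputable def mean {n : ℕ} (x : Fin n → ℝ) : ℝ := (∑ k, x k) / n
noncomputable def varOf {n : ℕ} (x : Fin n → ℝ) : ℝ := (∑ k, (x k - mean x) ^ 2) / n

/-- Gossip step: agents `i` and `j` both take the pairwise average. -/
noncomputable def gossip {n : ℕ} (x : Fin n → ℝ) (i j : Fin n) : Fin n → ℝ :=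
  fun k => if k = i ∨ k = j then (x i + x j) / 2 else x k

/-!
A gossip step keeps the mean and lowers the sum of squared deviations by exactly
`(x i - x j)^2 / 2`, so `Var (gossip x i j) = Var x - (x i - x j)^2 / (2n)`. Averaging over
the `n^2` pairs, the identity `∑ i, ∑ j, (x i - x j)^2 = 2 n^2 Var x` turns the expected loss
into `Var x / n`.
-/

section Gossip

variable {n : ℕ} (x : Fin n → ℝ)

theorem sum_eq_mul_mean : ∑ k, x k = n * mean x := by
  rcases eq_or_ne n 0 with rfl | hn
  · simp
  · rw [mean, mul_div_cancel₀ _ (Nat.cast_ne_zero.mpr hn)]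

theorem sum_sq_sub_mean_eq_mul_varOf : ∑ k, (x k - mean x) ^ 2 = n * varOf x := by
  rcases eq_or_ne n 0 with rfl | hn
  · simp
  · rw [varOf, mul_div_cancel₀ _ (Nat.cast_ne_zero.mpr hn)]

theorem sum_sum_sub_sq_eq_varOf : ∑ i, ∑ j, (x i - x j) ^ 2 = 2 * n ^ 2 * varOf x := by
  have hsplit : ∀ i j, (x i - x j) ^ 2 = (x i - mean x) ^ 2 + (x j - mean x) ^ 2
      - 2 * (x i - mean x) * (x j - mean x) := fun i j => by ring
  simp only [hsplit, sum_sub_distrib, sum_add_distrib, sum_const, card_univ, Fintype.card_fin,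
    nsmul_eq_mul, ← mul_sum, ← sum_mul]
  rw [sum_sq_sub_mean_eq_mul_varOf, sum_eq_mul_mean x, sub_self]
  ring

@[simp]
theorem gossip_self (i : Fin n) : gossip x i i = x := by
  ext k
  by_cases hk : k = i <;> simp [gossip, hk]

theorem sum_comp_gossip_of_ne (f : ℝ → ℝ) {i j : Fin n} (hij : i ≠ j) :
    ∑ k, f (gossip x i j k)
      = ∑ k, f (x k) + (2 * f ((x i + x j) / 2) - f (x i) - f (x j)) := by
  have hdiff : ∑ k ∈ {i, j}, (f (gossip x i j k) - f (x k))
      = ∑ k, (f (gossip x i j k) - f (x k)) := by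
    refine sum_subset (subset_univ _) fun k _ hk => ?_
    simp only [mem_insert, mem_singleton] at hk
    simp [gossip, hk]
  have hi : gossip x i j i = (x i + x j) / 2 := by simp [gossip]
  have hj : gossip x i j j = (x i + x j) / 2 := by simp [gossip]
  rw [sum_pair hij, sum_sub_distrib, hi, hj] at hdiff
  linarith

theorem sum_sub_sq_gossip (c : ℝ) (i j : Fin n) :
    ∑ k, (gossip x i j k - c) ^ 2 = ∑ k, (x k - c) ^ 2 - (x i - x j) ^ 2 / 2 := by
  rcases eq_or_ne i j with rfl | hij
  · simp
  · rw [sum_comp_gossip_of_ne x (fun y => (y - c) ^ 2) hij]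
    ring

theorem mean_gossip (i j : Fin n) : mean (gossip x i j) = mean x := by
  rcases eq_or_ne i j with rfl | hij
  · simp
  · rw [mean, sum_comp_gossip_of_ne x (fun y => y) hij, mean]
    ring

theorem varOf_gossip (i j : Fin n) :
    varOf (gossip x i j) = varOf x - (x i - x j) ^ 2 / (2 * n) := by
  rw [varOf, mean_gossip, sum_sub_sq_gossip, varOf]
  ring

end Gossip

theorem gossip_expected_variance_general {n : ℕ} (x : Fin n → ℝ) :
    (∑ i : Fin n, ∑ j : Fin n, varOf (gossip x i j)) / (n ^ 2 : ℝ)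
      = (1 - 1 / n) * varOf x := by
  rcases eq_or_ne n 0 with rfl | hn
  · simp [varOf]
  have hsum : ∑ i : Fin n, ∑ j : Fin n, varOf (gossip x i j) = n ^ 2 * varOf x - n * varOf x := by
    simp only [varOf_gossip, sum_sub_distrib, ← sum_div, sum_sum_sub_sq_eq_varOf, sum_const,
      card_univ, Fintype.card_fin, nsmul_eq_mul]
    field_simp
  rw [hsum]
  field_simp

theorem gossip_expected_variance {n : ℕ} (hn : 0 < n) (x : Fin n → ℝ) :
    (∑ i : Fin n, ∑ j : Fin n, varOf (gossip x i j)) / (n ^ 2 : ℝ)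
      = (1 - 1 / n) * varOf x :=
  gossip_expected_variance_general x
end

section
/- Under a random replacement in a system of n ≥ 2 agents (uniform departure followed by independent arrival with mean 0, variance σ²), if additionally E[x̄² ] ≤ σ²/n (which holds when initial values are i.i.d. with mean 0 and variance σ² and the dynamics consist of value-independent gossips, arrivals and departures), then E[Var(x')] ≤ ((n² − n − 1)/n²)·E[Var(x)] + ((n² − 1)/n³)·σ². -/
/-!
Write `N = n + 1`. Appending a value `w` changes the variance by a quadratic polynomial in `w`
whose linear term integrates to zero against a mean-zero arrival, so the arrival only contributes
`(n / N²) σ²`. What remains, the variance with the departed agent replaced by `0`, averages over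
the departing agent to exactly `((N² - N - 1) / N²) Var x + (n / N²) x̄²`. Taking expectations
and using `E[x̄²] ≤ σ² / N` gives the bound, as `(n / N²) (σ² / N + σ²) = (N² - 1) σ² / N³`.
-/

open Finset MeasureTheory

/-- The vector `x` with its `j`-th entry removed. -/
def removeAt {n : ℕ} (j : Fin (n + 1)) (x : Fin (n + 1) → ℝ) : Fin n → ℝ :=
  fun k => x (j.succAbove k)

lemma varOf_eq_sum_sq_div_sub_sq_mean {n : ℕ} (x : Fin n → ℝ) :
    varOf x = (∑ k, x k ^ 2) / n - mean x ^ 2 := by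
  rcases Nat.eq_zero_or_pos n with rfl | hn
  · simp [varOf, mean]
  have hS : ∑ k, x k = n * mean x := by rw [mean]; field_simp
  simp only [varOf, sub_sq, sum_add_distrib, sum_sub_distrib, ← sum_mul, ← mul_sum, hS,
    sum_const, card_univ, Fintype.card_fin, nsmul_eq_mul]
  field_simp
  ring

lemma varOf_nonneg {n : ℕ} (x : Fin n → ℝ) : 0 ≤ varOf x := by
  unfold varOf; positivity

lemma varOf_add_sq_mean_le_sum_sq {n : ℕ} (x : Fin n → ℝ) :
    varOf x + mean x ^ 2 ≤ ∑ k, x k ^ 2 := by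
  rw [varOf_eq_sum_sq_div_sub_sq_mean, sub_add_cancel]
  rcases Nat.eq_zero_or_pos n with rfl | hn
  · simp
  exact div_le_self (by positivity) (by exact_mod_cast hn)

lemma varOf_le_sum_sq {n : ℕ} (x : Fin n → ℝ) : varOf x ≤ ∑ k, x k ^ 2 := by
  linarith [varOf_add_sq_mean_le_sum_sq x, sq_nonneg (mean x)]

lemma sq_mean_le_sum_sq {n : ℕ} (x : Fin n → ℝ) : mean x ^ 2 ≤ ∑ k, x k ^ 2 := by
  linarith [varOf_add_sq_mean_le_sum_sq x, varOf_nonneg x]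

lemma continuous_varOf {n : ℕ} : Continuous (varOf : (Fin n → ℝ) → ℝ) := by
  unfold varOf mean; fun_prop

lemma continuous_mean {n : ℕ} : Continuous (mean : (Fin n → ℝ) → ℝ) := by
  unfold mean; fun_prop

lemma sum_snoc_removeAt {n : ℕ} (f : ℝ → ℝ) (j : Fin (n + 1)) (x : Fin (n + 1) → ℝ)
    (w : ℝ) :
    ∑ k, f ((Fin.snoc (removeAt j x) w : Fin (n + 1) → ℝ) k)
      = ∑ k, f (x k) - f (x j) + f w := by
  rw [Fin.sum_univ_castSucc, Fin.sum_univ_succAbove (fun k => f (x k)) j]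
  simp only [Fin.snoc_castSucc, Fin.snoc_last, removeAt]
  ring

lemma varOf_snoc_removeAt_le_sum_sq {n : ℕ} (j : Fin (n + 1)) (x : Fin (n + 1) → ℝ) :
    varOf (Fin.snoc (removeAt j x) 0 : Fin (n + 1) → ℝ) ≤ ∑ k, x k ^ 2 := by
  have := varOf_le_sum_sq (Fin.snoc (removeAt j x) 0 : Fin (n + 1) → ℝ)
  rw [sum_snoc_removeAt (· ^ 2)] at this
  nlinarith [sq_nonneg (x j)]

lemma continuous_snoc_removeAt {n : ℕ} (j : Fin (n + 1)) (w : ℝ) :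
    Continuous fun x : Fin (n + 1) → ℝ => (Fin.snoc (removeAt j x) w : Fin (n + 1) → ℝ) :=
  (continuous_pi fun k => continuous_apply (j.succAbove k)).finSnoc continuous_const

lemma varOf_snoc {n : ℕ} (y : Fin n → ℝ) (w : ℝ) :
    varOf (Fin.snoc y w : Fin (n + 1) → ℝ)
      = varOf (Fin.snoc y 0 : Fin (n + 1) → ℝ) - 2 * (∑ k, y k) / ((n : ℝ) + 1) ^ 2 * w
        + n / ((n : ℝ) + 1) ^ 2 * w ^ 2 := by
  simp only [varOf_eq_sum_sq_div_sub_sq_mean, mean, Fin.sum_univ_castSucc, Fin.snoc_castSucc,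
    Fin.snoc_last]
  push_cast
  field_simp
  ring

lemma integral_varOf_snoc {n : ℕ} {Ω : Type*} [MeasurableSpace Ω] {μ : Measure Ω}
    [IsProbabilityMeasure μ] (y : Fin n → ℝ) {v : Ω → ℝ} (hv : Integrable v μ)
    (hv2 : Integrable (fun ω => v ω ^ 2) μ) (hv0 : ∫ ω, v ω ∂μ = 0) :
    ∫ ω, varOf (Fin.snoc y (v ω) : Fin (n + 1) → ℝ) ∂μ
      = varOf (Fin.snoc y 0 : Fin (n + 1) → ℝ)
        + n / ((n : ℝ) + 1) ^ 2 * ∫ ω, v ω ^ 2 ∂μ := by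
  simp_rw [varOf_snoc y (v _)]
  rw [integral_add (by fun_prop) (hv2.const_mul _),
    integral_sub (by fun_prop) (hv.const_mul _), integral_const_mul, integral_const_mul,
    integral_const, hv0]
  simp

lemma sum_varOf_snoc_removeAt_zero {n : ℕ} (x : Fin (n + 1) → ℝ) :
    (∑ j, varOf (Fin.snoc (removeAt j x) 0 : Fin (n + 1) → ℝ)) / ((n : ℝ) + 1)
      = ((((n : ℝ) + 1) ^ 2 - ((n : ℝ) + 1) - 1) / ((n : ℝ) + 1) ^ 2) * varOf x
        + n / ((n : ℝ) + 1) ^ 2 * mean x ^ 2 := by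
  set N : ℝ := (n : ℝ) + 1
  have hN : N ≠ 0 := by positivity
  have hterm : ∀ j, varOf (Fin.snoc (removeAt j x) 0 : Fin (n + 1) → ℝ)
      = ((∑ k, x k ^ 2) / N - (∑ k, x k) ^ 2 / N ^ 2)
        + 2 * (∑ k, x k) / N ^ 2 * x j - (1 / N + 1 / N ^ 2) * x j ^ 2 := by
    intro j
    rw [varOf_eq_sum_sq_div_sub_sq_mean, mean, sum_snoc_removeAt (· ^ 2),
      sum_snoc_removeAt (fun t => t)]
    push_cast
    field_simp
    ring
  simp only [hterm, sum_sub_distrib, sum_add_distrib, ← mul_sum, sum_const, card_univ,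
    Fintype.card_fin, nsmul_eq_mul, varOf_eq_sum_sq_div_sub_sq_mean, mean]
  push_cast
  field_simp
  ring

lemma integrable_comp_of_le_sum_sq {m : ℕ} {Ω : Type*} [MeasurableSpace Ω] {μ : Measure Ω}
    {f : (Fin m → ℝ) → ℝ} (hf : Continuous f) (hf0 : ∀ x, 0 ≤ f x)
    (hf_le : ∀ x, f x ≤ ∑ k, x k ^ 2) {X : Ω → Fin m → ℝ}
    (hX : ∀ k, AEStronglyMeasurable (fun ω => X ω k) μ)
    (hX2 : ∀ k, Integrable (fun ω => X ω k ^ 2) μ) :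
    Integrable (fun ω => f (X ω)) μ :=
  (integrable_finsetSum _ fun k _ => hX2 k).mono'
    (hf.comp_aestronglyMeasurable
      (aemeasurable_pi_lambda _ fun k => (hX k).aemeasurable).aestronglyMeasurable)
    (ae_of_all _ fun ω => by simpa [abs_of_nonneg (hf0 _)] using hf_le (X ω))

theorem replacement_expected_variance_bound_general {n : ℕ}
    {Ω₁ : Type*} [MeasureSpace Ω₁] [IsProbabilityMeasure (volume : Measure Ω₁)]
    {Ω₂ : Type*} [MeasureSpace Ω₂] [IsProbabilityMeasure (volume : Measure Ω₂)]
    (X : Ω₁ → Fin (n + 1) → ℝ) (v : Ω₂ → ℝ) (σ : ℝ)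
    (hX : ∀ k, Integrable (fun ω₁ => X ω₁ k))
    (hX2 : ∀ k, Integrable (fun ω₁ => (X ω₁ k) ^ 2))
    (hv1 : ∫ ω₂, v ω₂ = 0) (hv2 : ∫ ω₂, (v ω₂) ^ 2 = σ ^ 2)
    (hint : Integrable v) (hint2 : Integrable (fun ω₂ => (v ω₂) ^ 2))
    (hmeanbd : ∫ ω₁, (mean (X ω₁)) ^ 2 ≤ σ ^ 2 / ((n : ℝ) + 1)) :
    (∑ j : Fin (n + 1), ∫ ω₁, ∫ ω₂, varOf (Fin.snoc (removeAt j (X ω₁)) (v ω₂)))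
        / ((n : ℝ) + 1)
      ≤ ((((n : ℝ) + 1) ^ 2 - ((n : ℝ) + 1) - 1) / ((n : ℝ) + 1) ^ 2)
          * (∫ ω₁, varOf (X ω₁))
        + ((((n : ℝ) + 1) ^ 2 - 1) / ((n : ℝ) + 1) ^ 3) * σ ^ 2 := by
  set A := (((n : ℝ) + 1) ^ 2 - ((n : ℝ) + 1) - 1) / ((n : ℝ) + 1) ^ 2
  set B := n / ((n : ℝ) + 1) ^ 2
  have hXm : ∀ k, AEStronglyMeasurable (fun ω₁ => X ω₁ k) := fun k => (hX k).1
  have hvar : Integrable fun ω₁ => varOf (X ω₁) :=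
    integrable_comp_of_le_sum_sq continuous_varOf varOf_nonneg varOf_le_sum_sq hXm hX2
  have hmean : Integrable fun ω₁ => mean (X ω₁) ^ 2 :=
    integrable_comp_of_le_sum_sq (f := fun x => mean x ^ 2) (continuous_mean.pow 2)
      (fun _ => sq_nonneg _) sq_mean_le_sum_sq hXm hX2
  have hremoved : ∀ j, Integrable fun ω₁ =>
      varOf (Fin.snoc (removeAt j (X ω₁)) 0 : Fin (n + 1) → ℝ) := fun j =>
    integrable_comp_of_le_sum_sq (continuous_varOf.comp (continuous_snoc_removeAt j 0))
      (fun _ => varOf_nonneg _) (varOf_snoc_removeAt_le_sum_sq j) hXm hX2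
  calc (∑ j, ∫ ω₁, ∫ ω₂, varOf (Fin.snoc (removeAt j (X ω₁)) (v ω₂))) / ((n : ℝ) + 1)
      = ∫ ω₁, (∑ j, (varOf (Fin.snoc (removeAt j (X ω₁)) 0 : Fin (n + 1) → ℝ) + B * σ ^ 2))
          / ((n : ℝ) + 1) := by
        simp_rw [integral_varOf_snoc _ hint hint2 hv1, hv2]
        rw [integral_div,
          integral_finsetSum _ fun j _ => (hremoved j).fun_add (integrable_const _)]
    _ = ∫ ω₁, A * varOf (X ω₁) + B * mean (X ω₁) ^ 2 + B * σ ^ 2 := by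
        congr 1 with ω₁
        rw [sum_add_distrib, add_div, sum_varOf_snoc_removeAt_zero]
        simp [field]
    _ = A * (∫ ω₁, varOf (X ω₁)) + B * (∫ ω₁, mean (X ω₁) ^ 2) + B * σ ^ 2 := by
        rw [integral_add ((hvar.const_mul _).fun_add (hmean.const_mul _)) (integrable_const _),
          integral_add (hvar.const_mul _) (hmean.const_mul _)]
        simp [integral_const_mul]
    _ ≤ A * (∫ ω₁, varOf (X ω₁)) + B * (σ ^ 2 / ((n : ℝ) + 1)) + B * σ ^ 2 := by gcongr
    _ = A * (∫ ω₁, varOf (X ω₁)) + ((((n : ℝ) + 1) ^ 2 - 1) / ((n : ℝ) + 1) ^ 3) * σ ^ 2 := by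
        simp only [B]
        field_simp
        ring

/-- Random replacement in a system of `N = n+1 ≥ 2` agents with random state `X`.
Under the bound `E[x̄²] ≤ σ²/N`, the expected variance after replacement satisfies
`E[Var(x')] ≤ ((N²−N−1)/N²)·E[Var(x)] + ((N²−1)/N³)·σ²`. -/
theorem replacement_expected_variance_bound {n : ℕ} (hn : 1 ≤ n)
    {Ω₁ : Type*} [MeasureSpace Ω₁] [IsProbabilityMeasure (volume : Measure Ω₁)]
    {Ω₂ : Type*} [MeasureSpace Ω₂] [IsProbabilityMeasure (volume : Measure Ω₂)]
    (X : Ω₁ → Fin (n + 1) → ℝ) (v : Ω₂ → ℝ) (σ : ℝ)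
    (hX : ∀ k, Integrable (fun ω₁ => X ω₁ k))
    (hX2 : ∀ k, Integrable (fun ω₁ => (X ω₁ k) ^ 2))
    (hv1 : ∫ ω₂, v ω₂ = 0) (hv2 : ∫ ω₂, (v ω₂) ^ 2 = σ ^ 2)
    (hint : Integrable v) (hint2 : Integrable (fun ω₂ => (v ω₂) ^ 2))
    (hmeanbd : ∫ ω₁, (mean (X ω₁)) ^ 2 ≤ σ ^ 2 / ((n : ℝ) + 1)) :
    (∑ j : Fin (n + 1), ∫ ω₁, ∫ ω₂, varOf (Fin.snoc (removeAt j (X ω₁)) (v ω₂)))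
        / ((n : ℝ) + 1)
      ≤ ((((n : ℝ) + 1) ^ 2 - ((n : ℝ) + 1) - 1) / ((n : ℝ) + 1) ^ 2)
          * (∫ ω₁, varOf (X ω₁))
        + ((((n : ℝ) + 1) ^ 2 - 1) / ((n : ℝ) + 1) ^ 3) * σ ^ 2 :=
  replacement_expected_variance_bound_general X v σ hX hX2 hv1 hv2 hint hint2 hmeanbd
end
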